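/- arXiv:gr-qc/0104090 — 7 statements merged into one kernel-verified Lean document; each statement's English description precedes it below -/
import Mathlib

section
/- If a nonzero tensor T of rank r on a Lorentzian vector space is antisymmetric in some pair of its indices, then T does not have the dominant property, nor does -T (i.e., contracting T with r arbitrary causal future-pointing vectors cannot always yield a result of constant sign). -/
/-!
If `T` is antisymmetric in the slots `i, j` and dominant, then swapping the `i`-th and `j`-th
arguments shows `T u ≥ 0` and `-T u ≥ 0`, so `T` vanishes on all tuples of causal future-pointing
vectors. These vectors span `V` (`e₀` and `e₀ + eₐ` are causal), so by multilinearity `T = 0`.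
The same applies to `-T`, which is antisymmetric as well.
-/


noncomputable section

/-- Minkowski signature factors: (+1, -1, ..., -1). -/
def eta {n : ℕ} (i : Fin (n + 1)) : ℝ := if i = 0 then 1 else -1

/-- The Minkowski (Lorentzian) inner product of signature (+,-,...,-). -/
def mink {n : ℕ} (u v : Fin (n + 1) → ℝ) : ℝ := ∑ i, eta i * u i * v i

/-- A causal future-pointing vector. -/
def CausalFuture {n : ℕ} (u : Fin (n + 1) → ℝ) : Prop :=
  0 ≤ mink u u ∧ u ≠ 0 ∧ 0 < u 0

/-- A null future-pointing vector. -/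
def NullFuture {n : ℕ} (u : Fin (n + 1) → ℝ) : Prop :=
  mink u u = 0 ∧ u ≠ 0 ∧ 0 < u 0

/-- A timelike future-pointing vector. -/
def TimelikeFuture {n : ℕ} (u : Fin (n + 1) → ℝ) : Prop :=
  0 < mink u u ∧ 0 < u 0

/-- The Lorentzian metric as a matrix (covariant components). -/
def gMat {n : ℕ} : Matrix (Fin (n + 1)) (Fin (n + 1)) ℝ := Matrix.diagonal eta

/-- Contraction of a rank-2 covariant tensor with two vectors. -/
def quad {n : ℕ} (T : Matrix (Fin (n + 1)) (Fin (n + 1)) ℝ) (u v : Fin (n + 1) → ℝ) : ℝ :=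
  ∑ a, ∑ b, u a * T a b * v b

/-- The dominant property for rank-2 tensors. -/
def DP2 {n : ℕ} (T : Matrix (Fin (n + 1)) (Fin (n + 1)) ℝ) : Prop :=
  ∀ u v, CausalFuture u → CausalFuture v → 0 ≤ quad T u v

/-- (T ₂×₂ T)_{ab} = T_{ac} T_b{}^c : contraction on the second index of each factor. -/
def sq2 {n : ℕ} (T : Matrix (Fin (n + 1)) (Fin (n + 1)) ℝ) :
    Matrix (Fin (n + 1)) (Fin (n + 1)) ℝ :=
  Matrix.of fun a b => ∑ c, eta c * T a c * T b c

/-- (T ₁×₁ T)_{ab} = T_{ca} T^c{}_b : contraction on the first index of each factor. -/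
def sq1 {n : ℕ} (T : Matrix (Fin (n + 1)) (Fin (n + 1)) ℝ) :
    Matrix (Fin (n + 1)) (Fin (n + 1)) ℝ :=
  Matrix.of fun a b => ∑ c, eta c * T c a * T c b

/-- The linear map v^a ↦ v^a T_a{}^b defined by a rank-2 tensor T. -/
def tmap {n : ℕ} (T : Matrix (Fin (n + 1)) (Fin (n + 1)) ℝ) (v : Fin (n + 1) → ℝ) :
    Fin (n + 1) → ℝ := fun b => eta b * ∑ a, v a * T a b

/-- (A×B)_{ab} := A_{ca} B^c{}_b. -/
def xprod {n : ℕ} (A B : Matrix (Fin (n + 1)) (Fin (n + 1)) ℝ) :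
    Matrix (Fin (n + 1)) (Fin (n + 1)) ℝ :=
  Matrix.of fun a b => ∑ c, eta c * A c a * B c b

/-- The dominant property for rank-r covariant tensors. -/
def DP {n r : ℕ} (T : MultilinearMap ℝ (fun _ : Fin r => (Fin (n + 1) → ℝ)) ℝ) : Prop :=
  ∀ u : Fin r → (Fin (n + 1) → ℝ), (∀ i, CausalFuture (u i)) → 0 ≤ T u

theorem MultilinearMap.eq_zero_of_span_eq_top {R ι N : Type*} {M : ι → Type*} [CommSemiring R]
    [∀ i, AddCommMonoid (M i)] [∀ i, Module R (M i)] [AddCommMonoid N] [Module R N]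
    [Fintype ι] (f : MultilinearMap R M N) {s : ∀ i, Set (M i)}
    (hs : ∀ i, Submodule.span R (s i) = ⊤) (hf : ∀ u, (∀ i, u i ∈ s i) → f u = 0) : f = 0 := by
  classical
  -- Free the slots in `S` one at a time: in a single slot `f` is linear and vanishes on `s k`.
  suffices key : ∀ S : Finset ι, ∀ u, (∀ i ∉ S, u i ∈ s i) → f u = 0 by
    ext u; exact key Finset.univ u (by simp)
  intro S
  induction S using Finset.induction_on with
  | empty => simpa using hf
  | insert k S _ ih =>
    intro u hu
    have hline : f.toLinearMap u k = 0 := by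
      refine LinearMap.ext_on (hs k) fun x hx => ih _ fun i hi => ?_
      rcases eq_or_ne i k with rfl | hik
      · simpa using hx
      · simpa [hik] using hu i (by simp [hik, hi])
    simpa using LinearMap.congr_fun hline (u k)

lemma causalFuture_single_zero {n : ℕ} : CausalFuture (Pi.single 0 1 : Fin (n + 1) → ℝ) :=
  ⟨by simp [mink, eta, Pi.single_apply], by simp, by simp⟩

lemma causalFuture_single_zero_add_single {n : ℕ} {a : Fin (n + 1)} (ha : a ≠ 0) :
    CausalFuture (Pi.single 0 1 + Pi.single a 1 : Fin (n + 1) → ℝ) := by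
  refine ⟨?_, fun h => by simpa [ha.symm] using congrFun h 0, by simp [ha.symm]⟩
  simp [mink, eta, Pi.single_apply, mul_add, Finset.sum_add_distrib, ha, ha.symm]

lemma span_causalFuture_eq_top {n : ℕ} :
    Submodule.span ℝ {u : Fin (n + 1) → ℝ | CausalFuture u} = ⊤ := by
  set C := Submodule.span ℝ {u : Fin (n + 1) → ℝ | CausalFuture u}
  have hbasis : ∀ a, (Pi.single a 1 : Fin (n + 1) → ℝ) ∈ C := by
    have h0 : (Pi.single 0 1 : Fin (n + 1) → ℝ) ∈ C := Submodule.subset_span causalFuture_single_zero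
    intro a
    rcases eq_or_ne a 0 with rfl | ha
    · exact h0
    · simpa using C.sub_mem
        (Submodule.subset_span (causalFuture_single_zero_add_single ha)) h0
  rw [eq_top_iff, ← (Pi.basisFun ℝ (Fin (n + 1))).span_eq, Submodule.span_le]
  rintro _ ⟨a, rfl⟩
  simpa using hbasis a

lemma DP.eq_zero_of_antisymm {n r : ℕ}
    {T : MultilinearMap ℝ (fun _ : Fin r => (Fin (n + 1) → ℝ)) ℝ} (hT : DP T) {i j : Fin r}
    (hanti : ∀ u : Fin r → (Fin (n + 1) → ℝ), T (u ∘ Equiv.swap i j) = - T u) :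
    T = 0 := by
  refine T.eq_zero_of_span_eq_top (fun _ => span_causalFuture_eq_top) fun u hu => ?_
  have h₁ := hT u hu
  have h₂ := hT (u ∘ Equiv.swap i j) fun k => hu _
  rw [hanti] at h₂
  linarith

theorem stmt0_general {n r : ℕ} (T : MultilinearMap ℝ (fun _ : Fin r => (Fin (n + 1) → ℝ)) ℝ)
    (hT : T ≠ 0) (i j : Fin r)
    (hanti : ∀ u : Fin r → (Fin (n + 1) → ℝ), T (u ∘ Equiv.swap i j) = - T u) :
    ¬ DP T ∧ ¬ DP (-T) := by
  have hanti_neg : ∀ u : Fin r → (Fin (n + 1) → ℝ), (-T) (u ∘ Equiv.swap i j) = - (-T) u := by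
    simp [hanti]
  exact ⟨fun h => hT (h.eq_zero_of_antisymm hanti),
    fun h => hT (neg_eq_zero.mp (h.eq_zero_of_antisymm hanti_neg))⟩

/-- a nonzero rank-r tensor antisymmetric in a pair of indices is not
in DP ∪ -DP. -/
theorem stmt0 {n r : ℕ} (T : MultilinearMap ℝ (fun _ : Fin r => (Fin (n + 1) → ℝ)) ℝ)
    (hT : T ≠ 0) (i j : Fin r) (hij : i ≠ j)
    (hanti : ∀ u : Fin r → (Fin (n + 1) → ℝ), T (u ∘ Equiv.swap i j) = - T u) :
    ¬ DP T ∧ ¬ DP (-T) :=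
  stmt0_general T hT i j hanti
end
end

section
/- If a rank-r tensor T has the dominant property and T(u,...,u) = 0 for some timelike vector u, then T = 0. -/
noncomputable section

/-!
Replacing `u` by `-u` if necessary, `u` is future timelike. The tensor is first shown to vanish
on tuples of future timelike vectors, replacing the slots equal to `u` one at a time: putting
`u + t x` in a slot turns `T` into an affine function of `t` which vanishes at `t = 0` and is
nonnegative near it, so its slope, the value with `x` in that slot, is zero. Since `u + t x` is
future timelike for small `t` whatever `x` is, the same argument, run once more slot by slot,
then frees each slot to be arbitrary.
-/

open Filter Topology Function

namespace MultilinearMap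

variable {ι E : Type*} [DecidableEq ι] [AddCommGroup E] [Module ℝ E]
  (T : MultilinearMap ℝ (fun _ : ι => E) ℝ) {C : Set E} {u : E}

lemma map_update_eq_zero_of_eventually_nonneg (v : ι → E) (j : ι) (x : E)
    (hu : T (update v j u) = 0) (h : ∀ᶠ t in 𝓝 (0 : ℝ), 0 ≤ T (update v j (u + t • x))) :
    T (update v j x) = 0 := by
  have hline : ∀ t : ℝ, T (update v j (u + t • x)) = t * T (update v j x) := fun t => by
    rw [T.map_update_add, T.map_update_smul, hu, zero_add, smul_eq_mul]
  have hmin : IsLocalMin (fun t : ℝ => t * T (update v j x)) 0 := by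
    simpa [IsLocalMin, IsMinFilter, hline] using h
  exact hmin.hasDerivAt_eq_zero (hasDerivAt_mul_const _)

variable [Fintype ι] (hC : ∀ x, ∀ᶠ t in 𝓝 (0 : ℝ), u + t • x ∈ C)
  (hT : ∀ w : ι → E, (∀ i, w i ∈ C) → 0 ≤ T w) (h0 : T (fun _ => u) = 0)
include hC hT h0

lemma map_eq_zero_of_forall_mem (w : ι → E) (hw : ∀ i, w i ∈ C) : T w = 0 := by
  have huC : u ∈ C := by simpa using (hC 0).self_of_nhds
  suffices ∀ S : Finset ι, ∀ w : ι → E, (∀ i, w i ∈ C) → (∀ i ∉ S, w i = u) → T w = 0 from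
    this Finset.univ w hw (by simp)
  intro S
  induction S using Finset.induction_on with
  | empty =>
    intro w _ hwu
    rw [show w = fun _ => u from funext fun i => hwu i (Finset.notMem_empty i), h0]
  | insert j S _ ih =>
    intro w hwC hwu
    rw [← update_eq_self j w]
    refine T.map_update_eq_zero_of_eventually_nonneg w j (w j) (u := u) (ih _ ?_ ?_) ?_
    · exact (forall_update_iff w fun _ z => z ∈ C).2 ⟨huC, fun i _ => hwC i⟩
    · intro i hi
      rcases eq_or_ne i j with rfl | hij
      · simp
      · rw [update_of_ne hij]
        exact hwu i (by simp [hij, hi])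
    · filter_upwards [hC (w j)] with t ht
      exact hT _ ((forall_update_iff w fun _ z => z ∈ C).2 ⟨ht, fun i _ => hwC i⟩)

theorem eq_zero_of_nonneg_of_map_eq_zero : T = 0 := by
  have huC : u ∈ C := by simpa using (hC 0).self_of_nhds
  suffices ∀ S : Finset ι, ∀ w : ι → E, (∀ i ∉ S, w i ∈ C) → T w = 0 from
    ext fun w => this Finset.univ w (by simp)
  intro S
  induction S using Finset.induction_on with
  | empty =>
    intro w hw
    exact T.map_eq_zero_of_forall_mem hC hT h0 w fun i => hw i (Finset.notMem_empty i)
  | insert j S _ ih =>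
    intro w hw
    have hupd : ∀ y ∈ C, ∀ i ∉ S, update w j y i ∈ C := fun y hy i hi => by
      rcases eq_or_ne i j with rfl | hij
      · simpa using hy
      · rw [update_of_ne hij]
        exact hw i (by simp [hij, hi])
    rw [← update_eq_self j w]
    refine T.map_update_eq_zero_of_eventually_nonneg w j (w j) (u := u) (ih _ (hupd u huC)) ?_
    filter_upwards [hC (w j)] with t ht
    exact (ih _ (hupd _ ht)).ge

end MultilinearMap

section Minkowski

variable {n : ℕ}

lemma mink_self (u : Fin (n + 1) → ℝ) : mink u u = u 0 ^ 2 - ∑ i : Fin n, u i.succ ^ 2 := by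
  simp [mink, Fin.sum_univ_succ, eta, Fin.succ_ne_zero, sq, sub_eq_add_neg]

lemma TimelikeFuture.causalFuture {u : Fin (n + 1) → ℝ} (hu : TimelikeFuture u) :
    CausalFuture u :=
  ⟨hu.1.le, fun h => by simpa [h] using hu.2, hu.2⟩

lemma timelikeFuture_or_timelikeFuture_neg {u : Fin (n + 1) → ℝ} (hu : 0 < mink u u) :
    TimelikeFuture u ∨ TimelikeFuture (-u) := by
  have hneg : mink (-u) (-u) = mink u u := by simp [mink]
  have hu0 : u 0 ≠ 0 := by
    intro h
    rw [mink_self, h] at hu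
    have : 0 ≤ ∑ i : Fin n, u i.succ ^ 2 := by positivity
    linarith
  rcases hu0.lt_or_gt with h | h
  · exact Or.inr ⟨hneg ▸ hu, by simpa using h⟩
  · exact Or.inl ⟨hu, h⟩

lemma isOpen_setOf_timelikeFuture : IsOpen {u : Fin (n + 1) → ℝ | TimelikeFuture u} := by
  have hcont : Continuous fun u : Fin (n + 1) → ℝ => mink u u := by
    unfold mink
    fun_prop
  exact (isOpen_lt continuous_const hcont).inter (isOpen_lt continuous_const (continuous_apply 0))

lemma TimelikeFuture.eventually_add_smul {u : Fin (n + 1) → ℝ} (hu : TimelikeFuture u)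
    (x : Fin (n + 1) → ℝ) : ∀ᶠ t in 𝓝 (0 : ℝ), TimelikeFuture (u + t • x) := by
  have hline : Continuous fun t : ℝ => u + t • x := by fun_prop
  exact (hline.tendsto' 0 u (by simp)).eventually (isOpen_setOf_timelikeFuture.eventually_mem hu)

end Minkowski

/-- if T ∈ DP and T(u,...,u) = 0 for a timelike u, then T = 0. -/
theorem stmt1 {n r : ℕ} (T : MultilinearMap ℝ (fun _ : Fin r => (Fin (n + 1) → ℝ)) ℝ)
    (hDP : DP T) (u : Fin (n + 1) → ℝ) (hu : 0 < mink u u)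
    (h0 : T (fun _ => u) = 0) : T = 0 := by
  have hT : ∀ w : Fin r → Fin (n + 1) → ℝ, (∀ i, w i ∈ {v | TimelikeFuture v}) → 0 ≤ T w :=
    fun w hw => hDP w fun i => (hw i).causalFuture
  rcases timelikeFuture_or_timelikeFuture_neg hu with hfut | hpast
  · exact T.eq_zero_of_nonneg_of_map_eq_zero hfut.eventually_add_smul hT h0
  · refine T.eq_zero_of_nonneg_of_map_eq_zero hpast.eventually_add_smul hT ?_
    have hneg : (fun _ : Fin r => -u) = fun _ => (-1 : ℝ) • u := by simp
    rw [hneg, T.map_smul_univ, h0, smul_zero]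
end
end

section
/- Let T be a bilinear form (rank-2 tensor) on a Lorentzian vector space such that the 'square' T_{ac} T_b{}^c (contraction on the second index of each factor via the metric) is a nonzero tensor with the dominant property. Then either T or -T has the dominant property. -/
noncomputable section

/-!
Write `W = gMat * Tᵀ` for the endomorphism `u ↦ T_a{}^b u^a`, so that `T(u, v) = ⟨W u, v⟩` and
`(sq2 T)(u, v) = ⟨W u, W v⟩`. The hypothesis says that `W` maps the future cone `C` to causal
vectors with pairwise nonnegative products. If the time component of `W u` has constant sign on
`C`, then `W` or `-W` maps `C` into the closed future cone, and the reverse Cauchy–Schwarz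
inequality gives the dominant property of `T` or `-T`. Otherwise take `u₁, u₂ ∈ C` with
`(W u₁)⁰ > 0 > (W u₂)⁰`: a positive combination `u` of them has `(W u)⁰ = 0`, and a causal vector
with vanishing time component is zero, so `W u₁` and `W u₂` are negatively proportional. Pairing
them forces `W u₁` to be null and every `W u`, `u ∈ C`, to be a multiple of `W u₁`; hence `sq2 T`
vanishes on `C × C`, and so everywhere, since `C` spans the space.
-/

open Matrix

variable {n : ℕ}

lemma eta_mul_self (i : Fin (n + 1)) : eta i * eta i = 1 := by
  unfold eta; split_ifs <;> norm_num

lemma gMat_mul_self : (gMat : Matrix (Fin (n + 1)) (Fin (n + 1)) ℝ) * gMat = 1 := by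
  simp [gMat, diagonal_mul_diagonal, eta_mul_self]

lemma transpose_gMat : (gMat : Matrix (Fin (n + 1)) (Fin (n + 1)) ℝ)ᵀ = gMat :=
  diagonal_transpose _

lemma mink_eq_dotProduct (u v : Fin (n + 1) → ℝ) : mink u v = u ⬝ᵥ gMat *ᵥ v := by
  simp only [mink, gMat, mulVec_diagonal, dotProduct]
  exact Finset.sum_congr rfl fun _ _ => by ring

lemma quad_eq_dotProduct (T : Matrix (Fin (n + 1)) (Fin (n + 1)) ℝ) (u v : Fin (n + 1) → ℝ) :
    quad T u v = u ⬝ᵥ T *ᵥ v := by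
  simp only [quad, dotProduct, mulVec, Finset.mul_sum, mul_assoc]

lemma sq2_eq (T : Matrix (Fin (n + 1)) (Fin (n + 1)) ℝ) : sq2 T = T * gMat * Tᵀ := by
  ext a b
  rw [gMat, mul_apply]
  simp only [sq2, of_apply, mul_diagonal, transpose_apply]
  exact Finset.sum_congr rfl fun _ _ => by ring

lemma quad_eq_mink (T : Matrix (Fin (n + 1)) (Fin (n + 1)) ℝ) (u v : Fin (n + 1) → ℝ) :
    quad T u v = mink ((gMat * Tᵀ) *ᵥ u) v := by
  rw [quad_eq_dotProduct, mink_eq_dotProduct, ← vecMul_transpose (gMat * Tᵀ) u,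
    ← dotProduct_mulVec, mulVec_mulVec, transpose_mul, transpose_transpose, transpose_gMat,
    Matrix.mul_assoc, gMat_mul_self, Matrix.mul_one]

lemma quad_sq2 (T : Matrix (Fin (n + 1)) (Fin (n + 1)) ℝ) (u v : Fin (n + 1) → ℝ) :
    quad (sq2 T) u v = mink ((gMat * Tᵀ) *ᵥ u) ((gMat * Tᵀ) *ᵥ v) := by
  rw [quad_eq_dotProduct, mink_eq_dotProduct, ← vecMul_transpose (gMat * Tᵀ) u,
    ← dotProduct_mulVec, mulVec_mulVec, mulVec_mulVec, sq2_eq, transpose_mul, transpose_transpose,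
    transpose_gMat, Matrix.mul_assoc T gMat gMat, gMat_mul_self, Matrix.mul_one, Matrix.mul_assoc]

lemma mink_comm (u v : Fin (n + 1) → ℝ) : mink u v = mink v u :=
  Finset.sum_congr rfl fun _ _ => by ring

lemma mink_add_left (u v w : Fin (n + 1) → ℝ) : mink (u + v) w = mink u w + mink v w := by
  simp only [mink_eq_dotProduct, add_dotProduct]

lemma mink_add_right (u v w : Fin (n + 1) → ℝ) : mink u (v + w) = mink u v + mink u w := by
  simp only [mink_eq_dotProduct, mulVec_add, dotProduct_add]

lemma mink_smul_left (c : ℝ) (u v : Fin (n + 1) → ℝ) : mink (c • u) v = c * mink u v := by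
  simp only [mink_eq_dotProduct, smul_dotProduct, smul_eq_mul]

lemma mink_smul_right (c : ℝ) (u v : Fin (n + 1) → ℝ) : mink u (c • v) = c * mink u v := by
  simp only [mink_eq_dotProduct, mulVec_smul, dotProduct_smul, smul_eq_mul]

lemma mink_eq_sub_sum (u v : Fin (n + 1) → ℝ) :
    mink u v = u 0 * v 0 - ∑ i : Fin n, u i.succ * v i.succ := by
  simp [mink, Fin.sum_univ_succ, eta, Fin.succ_ne_zero, sub_eq_add_neg]

lemma eq_zero_of_mink_self_nonneg {u : Fin (n + 1) → ℝ} (hu : 0 ≤ mink u u) (h0 : u 0 = 0) :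
    u = 0 := by
  rw [mink_eq_sub_sum, h0, zero_mul, zero_sub, neg_nonneg] at hu
  have hsq : ∀ i ∈ Finset.univ, 0 ≤ u (Fin.succ i) * u (Fin.succ i) :=
    fun i _ => mul_self_nonneg _
  have hzero := (Finset.sum_eq_zero_iff_of_nonneg hsq).mp (le_antisymm hu (Finset.sum_nonneg hsq))
  ext i
  induction i using Fin.cases with
  | zero => exact h0
  | succ i => exact mul_self_eq_zero.mp (hzero i (Finset.mem_univ i))

lemma mink_nonneg {u v : Fin (n + 1) → ℝ} (hu : 0 ≤ mink u u) (hv : 0 ≤ mink v v)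
    (hu0 : 0 ≤ u 0) (hv0 : 0 ≤ v 0) : 0 ≤ mink u v := by
  rw [mink_eq_sub_sum] at hu hv ⊢
  have cs := Finset.sum_mul_sq_le_sq_mul_sq Finset.univ (fun i : Fin n => u i.succ)
    (fun i : Fin n => v i.succ)
  simp only [sq] at cs
  have hu' : 0 ≤ ∑ i : Fin n, u i.succ * u i.succ :=
    Finset.sum_nonneg fun _ _ => mul_self_nonneg _
  have hv' : 0 ≤ ∑ i : Fin n, v i.succ * v i.succ :=
    Finset.sum_nonneg fun _ _ => mul_self_nonneg _
  nlinarith [mul_nonneg hu0 hv0, mul_nonneg hu' hv',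
    sq_nonneg (u 0 * v 0 + ∑ i : Fin n, u i.succ * v i.succ)]

lemma causalFuture_iff {u : Fin (n + 1) → ℝ} : CausalFuture u ↔ 0 ≤ mink u u ∧ 0 < u 0 :=
  ⟨fun h => ⟨h.1, h.2.2⟩, fun h => ⟨h.1, fun hu => by simp [hu] at h, h.2⟩⟩

lemma CausalFuture.add {u v : Fin (n + 1) → ℝ} (hu : CausalFuture u) (hv : CausalFuture v) :
    CausalFuture (u + v) := by
  rw [causalFuture_iff] at hu hv ⊢
  have huv := mink_nonneg hu.1 hv.1 hu.2.le hv.2.le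
  rw [mink_add_left, mink_add_right, mink_add_right, mink_comm v u]
  exact ⟨by linarith, by simp only [Pi.add_apply]; linarith⟩

lemma CausalFuture.smul {u : Fin (n + 1) → ℝ} (hu : CausalFuture u) {c : ℝ} (hc : 0 < c) :
    CausalFuture (c • u) := by
  rw [causalFuture_iff] at hu ⊢
  rw [mink_smul_left, mink_smul_right, Pi.smul_apply, smul_eq_mul]
  exact ⟨mul_nonneg hc.le (mul_nonneg hc.le hu.1), mul_pos hc hu.2⟩

lemma mink_single_left (a : Fin (n + 1)) (w : Fin (n + 1) → ℝ) :
    mink (Pi.single a 1) w = eta a * w a := by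
  simp [mink_eq_dotProduct, gMat, mulVec_diagonal]

lemma span_causalFuture : Submodule.span ℝ {u : Fin (n + 1) → ℝ | CausalFuture u} = ⊤ := by
  have he0 : CausalFuture (Pi.single 0 1 : Fin (n + 1) → ℝ) :=
    causalFuture_iff.mpr ⟨by simp [mink_single_left, eta], by simp⟩
  have hea (a : Fin (n + 1)) : CausalFuture (Pi.single 0 1 + Pi.single a 1 : Fin (n + 1) → ℝ) := by
    rcases eq_or_ne a 0 with rfl | ha
    · exact he0.add he0
    · refine causalFuture_iff.mpr ⟨?_, by simp [ha.symm]⟩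
      simp [mink_add_left, mink_single_left, eta, ha]
  rw [eq_top_iff, ← (Pi.basisFun ℝ (Fin (n + 1))).span_eq, Submodule.span_le]
  rintro _ ⟨a, rfl⟩
  rw [Pi.basisFun_apply, ← add_sub_cancel_left (Pi.single 0 1) (Pi.single a 1)]
  exact Submodule.sub_mem _ (Submodule.subset_span (hea a)) (Submodule.subset_span he0)

lemma eq_zero_of_quad_eq_zero {S : Matrix (Fin (n + 1)) (Fin (n + 1)) ℝ}
    (h : ∀ u v, CausalFuture u → CausalFuture v → quad S u v = 0) : S = 0 := by
  have hB : Matrix.toBilin' S = 0 :=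
    LinearMap.ext_on span_causalFuture fun u hu => LinearMap.ext_on span_causalFuture fun v hv => by
      simpa [Matrix.toBilin'_apply', quad_eq_dotProduct] using h u v hu hv
  simpa using hB

section SignChange

variable {m : ℕ} (L : (Fin (n + 1) → ℝ) →ₗ[ℝ] (Fin (m + 1) → ℝ))

lemma smul_apply_eq_of_time_pos_of_time_neg
    (hL : ∀ u v, CausalFuture u → CausalFuture v → 0 ≤ mink (L u) (L v))
    {u₁ u₂ : Fin (n + 1) → ℝ} (hu₁ : CausalFuture u₁) (hu₂ : CausalFuture u₂) (h₁ : 0 < L u₁ 0)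
    (h₂ : L u₂ 0 < 0) : L u₁ 0 • L u₂ = L u₂ 0 • L u₁ := by
  have hu : CausalFuture ((-L u₂ 0) • u₁ + L u₁ 0 • u₂) :=
    (hu₁.smul (neg_pos.mpr h₂)).add (hu₂.smul h₁)
  have hLu : L ((-L u₂ 0) • u₁ + L u₁ 0 • u₂) = 0 := by
    refine eq_zero_of_mink_self_nonneg (hL _ _ hu hu) ?_
    simp only [map_add, map_smul, Pi.add_apply, Pi.smul_apply, smul_eq_mul]
    ring
  rw [map_add, map_smul, map_smul] at hLu
  linear_combination (norm := module) hLu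

lemma smul_apply_eq_of_sign_change
    (hL : ∀ u v, CausalFuture u → CausalFuture v → 0 ≤ mink (L u) (L v))
    {u₁ u₂ : Fin (n + 1) → ℝ} (hu₁ : CausalFuture u₁) (hu₂ : CausalFuture u₂) (h₁ : 0 < L u₁ 0)
    (h₂ : L u₂ 0 < 0) {u : Fin (n + 1) → ℝ}
    (hu : CausalFuture u) : L u₁ 0 • L u = L u 0 • L u₁ := by
  rcases lt_trichotomy (L u 0) 0 with hneg | hzero | hpos
  · exact smul_apply_eq_of_time_pos_of_time_neg L hL hu₁ hu h₁ hneg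
  · simp [eq_zero_of_mink_self_nonneg (hL u u hu hu) hzero]
  · have h₁₂ := smul_apply_eq_of_time_pos_of_time_neg L hL hu₁ hu₂ h₁ h₂
    have h₂' := smul_apply_eq_of_time_pos_of_time_neg L hL hu hu₂ hpos h₂
    refine smul_right_injective _ h₂.ne ?_
    linear_combination (norm := module) L u 0 • h₁₂ - L u₁ 0 • h₂'

lemma mink_apply_eq_zero_of_sign_change
    (hL : ∀ u v, CausalFuture u → CausalFuture v → 0 ≤ mink (L u) (L v))
    {u₁ u₂ : Fin (n + 1) → ℝ} (hu₁ : CausalFuture u₁) (hu₂ : CausalFuture u₂) (h₁ : 0 < L u₁ 0)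
    (h₂ : L u₂ 0 < 0) {u v : Fin (n + 1) → ℝ}
    (hu : CausalFuture u) (hv : CausalFuture v) : mink (L u) (L v) = 0 := by
  have hnull : mink (L u₁) (L u₁) = 0 := by
    have h₁₂ := congrArg (mink (L u₁)) (smul_apply_eq_of_time_pos_of_time_neg L hL hu₁ hu₂ h₁ h₂)
    rw [mink_smul_right, mink_smul_right] at h₁₂
    nlinarith [hL u₁ u₂ hu₁ hu₂, hL u₁ u₁ hu₁ hu₁]
  have h := congrArg₂ mink (smul_apply_eq_of_sign_change L hL hu₁ hu₂ h₁ h₂ hu)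
    (smul_apply_eq_of_sign_change L hL hu₁ hu₂ h₁ h₂ hv)
  rw [mink_smul_left, mink_smul_right, mink_smul_left, mink_smul_right, hnull] at h
  simpa [h₁.ne'] using h

end SignChange

lemma sq2_neg (T : Matrix (Fin (n + 1)) (Fin (n + 1)) ℝ) : sq2 (-T) = sq2 T := by
  ext; simp [sq2]

lemma dp2_of_time_nonneg {T : Matrix (Fin (n + 1)) (Fin (n + 1)) ℝ} (hdp : DP2 (sq2 T))
    (h0 : ∀ u, CausalFuture u → 0 ≤ ((gMat * Tᵀ) *ᵥ u) 0) : DP2 T := by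
  intro u v hu hv
  rw [quad_eq_mink]
  exact mink_nonneg (quad_sq2 T u u ▸ hdp u u hu hu) hv.1 (h0 u hu) hv.2.2.le

/-- if the square T_{ac}T_b{}^c of a rank-2 tensor is a nonzero tensor
with the dominant property, then T or -T has the dominant property. -/
theorem stmt7 {n : ℕ} (T : Matrix (Fin (n + 1)) (Fin (n + 1)) ℝ)
    (hne : sq2 T ≠ 0) (hdp : DP2 (sq2 T)) :
    DP2 T ∨ DP2 (-T) := by
  have hL : ∀ u v, CausalFuture u → CausalFuture v →
      0 ≤ mink (toLin' (gMat * Tᵀ) u) (toLin' (gMat * Tᵀ) v) := fun u v hu hv => by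
    simpa only [toLin'_apply, quad_sq2] using hdp u v hu hv
  by_cases hpos : ∀ u, CausalFuture u → 0 ≤ ((gMat * Tᵀ) *ᵥ u) 0
  · exact .inl (dp2_of_time_nonneg hdp hpos)
  by_cases hneg : ∀ u, CausalFuture u → ((gMat * Tᵀ) *ᵥ u) 0 ≤ 0
  · refine .inr (dp2_of_time_nonneg (by rwa [sq2_neg]) fun u hu => ?_)
    simpa [Matrix.mul_neg, neg_mulVec] using hneg u hu
  push Not at hpos hneg
  obtain ⟨u₂, hu₂, h₂⟩ := hpos
  obtain ⟨u₁, hu₁, h₁⟩ := hneg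
  refine absurd (eq_zero_of_quad_eq_zero fun u v hu hv => ?_) hne
  rw [quad_sq2]
  exact mink_apply_eq_zero_of_sign_change _ hL hu₁ hu₂ h₁ h₂ hu hv
end
end

section
/- A symmetric bilinear form T on a Lorentzian vector space satisfies T = f·g for some scalar f if and only if T(k,k) = 0 for every null vector k. -/
noncomputable section

/-! Testing `T` on the null vectors `e₀ ± eᵢ` gives `T₀ᵢ = 0` and `Tᵢᵢ = -T₀₀` for every spatial
index `i`; for distinct spatial `i, j` the null vector `5e₀ + 3eᵢ + 4eⱼ` then leaves only the
cross term `24 Tᵢⱼ`, so `T = T₀₀ g`. -/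

section Quad

variable {n : ℕ}

theorem quad_add_left (M : Matrix (Fin (n + 1)) (Fin (n + 1)) ℝ) (u v w : Fin (n + 1) → ℝ) :
    quad M (u + v) w = quad M u w + quad M v w := by
  simp only [quad, Pi.add_apply, add_mul, Finset.sum_add_distrib]

theorem quad_add_right (M : Matrix (Fin (n + 1)) (Fin (n + 1)) ℝ) (u v w : Fin (n + 1) → ℝ) :
    quad M u (v + w) = quad M u v + quad M u w := by
  simp only [quad, Pi.add_apply, mul_add, Finset.sum_add_distrib]

theorem quad_single_single (M : Matrix (Fin (n + 1)) (Fin (n + 1)) ℝ) (i j : Fin (n + 1))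
    (a b : ℝ) : quad M (Pi.single i a) (Pi.single j b) = a * M i j * b := by
  simp [quad, Pi.single_apply]

theorem quad_smul (f : ℝ) (M : Matrix (Fin (n + 1)) (Fin (n + 1)) ℝ) (u v : Fin (n + 1) → ℝ) :
    quad (f • M) u v = f * quad M u v := by
  simp only [quad, Matrix.smul_apply, smul_eq_mul, Finset.mul_sum]
  exact Finset.sum_congr rfl fun _ _ => Finset.sum_congr rfl fun _ _ => by ring

theorem mink_eq_quad_gMat (u v : Fin (n + 1) → ℝ) : mink u v = quad gMat u v := by
  simp only [mink, quad, gMat, Matrix.diagonal_apply, mul_ite, ite_mul, mul_zero, zero_mul,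
    Finset.sum_ite_eq, Finset.mem_univ, if_true]
  exact Finset.sum_congr rfl fun _ _ => by ring

theorem gMat_apply (i j : Fin (n + 1)) :
    (gMat : Matrix (Fin (n + 1)) (Fin (n + 1)) ℝ) i j = if i = j then eta i else 0 :=
  Matrix.diagonal_apply _ _ _

theorem eta_zero : eta (0 : Fin (n + 1)) = 1 := if_pos rfl

theorem eta_of_ne_zero {i : Fin (n + 1)} (hi : i ≠ 0) : eta i = -1 := if_neg hi

end Quad

section NullCone

variable {n : ℕ} {T : Matrix (Fin (n + 1)) (Fin (n + 1)) ℝ}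

theorem add_entries_eq_zero_of_null (hnull : ∀ k, mink k k = 0 → quad T k k = 0)
    {i : Fin (n + 1)} (hi : i ≠ 0) (s : ℝ) (hs : s * s = 1) :
    T 0 0 + s * (T 0 i + T i 0) + T i i = 0 := by
  set k : Fin (n + 1) → ℝ := Pi.single 0 1 + Pi.single i s
  have hk : mink k k = 0 := by
    simp only [k, mink_eq_quad_gMat, quad_add_left, quad_add_right, quad_single_single,
      gMat_apply, eta_zero, eta_of_ne_zero hi, if_pos, hi, hi.symm, if_false]
    linear_combination -hs
  have := hnull k hk
  simp only [k, quad_add_left, quad_add_right, quad_single_single] at this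
  linear_combination this - T i i * hs

theorem entry_zero_and_diag_of_null (hsymm : ∀ a b, T a b = T b a)
    (hnull : ∀ k, mink k k = 0 → quad T k k = 0) {i : Fin (n + 1)} (hi : i ≠ 0) :
    T 0 i = 0 ∧ T i i = -T 0 0 := by
  have hplus := add_entries_eq_zero_of_null hnull hi 1 (by norm_num)
  have hminus := add_entries_eq_zero_of_null hnull hi (-1) (by norm_num)
  rw [hsymm i 0] at hplus hminus
  constructor <;> linarith

theorem entry_spatial_of_null (hsymm : ∀ a b, T a b = T b a)
    (hnull : ∀ k, mink k k = 0 → quad T k k = 0) {i j : Fin (n + 1)} (hi : i ≠ 0) (hj : j ≠ 0)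
    (hij : i ≠ j) : T i j = 0 := by
  set k : Fin (n + 1) → ℝ := Pi.single 0 5 + Pi.single i 3 + Pi.single j 4
  have hk : mink k k = 0 := by
    simp only [k, mink_eq_quad_gMat, quad_add_left, quad_add_right, quad_single_single,
      gMat_apply, eta_zero, eta_of_ne_zero hi, eta_of_ne_zero hj, if_pos, hi, hi.symm, hj, hj.symm,
      hij, hij.symm, if_false]
    norm_num
  have := hnull k hk
  simp only [k, quad_add_left, quad_add_right, quad_single_single] at this
  obtain ⟨h0i, hii⟩ := entry_zero_and_diag_of_null hsymm hnull hi
  obtain ⟨h0j, hjj⟩ := entry_zero_and_diag_of_null hsymm hnull hj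
  rw [hsymm i 0, hsymm j 0, hsymm j i, h0i, h0j, hii, hjj] at this
  linear_combination this / 24

theorem eq_smul_gMat_of_null (hsymm : ∀ a b, T a b = T b a)
    (hnull : ∀ k, mink k k = 0 → quad T k k = 0) : T = T 0 0 • gMat := by
  ext a b
  rw [Matrix.smul_apply, gMat_apply, smul_eq_mul]
  rcases eq_or_ne a 0 with rfl | ha <;> rcases eq_or_ne b 0 with rfl | hb
  · simp [eta_zero]
  · simp [hb.symm, (entry_zero_and_diag_of_null hsymm hnull hb).1]
  · simp [ha, hsymm a 0, (entry_zero_and_diag_of_null hsymm hnull ha).1]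
  · rcases eq_or_ne a b with rfl | hab
    · simp [eta_of_ne_zero ha, (entry_zero_and_diag_of_null hsymm hnull ha).2]
    · simp [hab, entry_spatial_of_null hsymm hnull ha hb hab]

end NullCone

/-- a symmetric bilinear form T equals f·g for some f iff T(k,k) = 0
for every null vector k (dimension ≥ 2). -/
theorem stmt10 {n : ℕ} (T : Matrix (Fin (n + 2)) (Fin (n + 2)) ℝ)
    (hsymm : ∀ a b, T a b = T b a) :
    (∃ f : ℝ, T = f • gMat) ↔
      ∀ k : Fin (n + 2) → ℝ, mink k k = 0 → quad T k k = 0 := by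
  constructor
  · rintro ⟨f, rfl⟩ k hk
    rw [quad_smul, ← mink_eq_quad_gMat, hk, mul_zero]
  · exact fun hnull => ⟨T 0 0, eq_smul_gMat_of_null hsymm hnull⟩
end
end

section
/- In dimension N ≥ 3, if a rank-2 tensor T satisfies T_{ac} T_b{}^c = f·g_{ab}, then f ≥ 0. -/
noncomputable section

/-! The rows `T a` of `T` satisfy `mink (T a) (T b) = f * g_ab`, so for `f < 0` the rows `T 1` and
`T 2` would be two mutually orthogonal timelike vectors. There are none: if `mink u u > 0` and
`mink u v = 0`, the combination `v 0 • u - u 0 • v` has vanishing time component, hence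
non-positive norm, and this norm is `(v 0)² mink u u + (u 0)² mink v v`, forcing `mink v v ≤ 0`. -/

lemma mink_self_nonpos_of_apply_zero {n : ℕ} {u : Fin (n + 1) → ℝ} (h0 : u 0 = 0) :
    mink u u ≤ 0 := by
  refine Finset.sum_nonpos fun i _ => ?_
  by_cases hi : i = 0
  · simp [hi, h0]
  · simp only [eta, if_neg hi]
    nlinarith [sq_nonneg (u i)]

lemma apply_zero_ne_zero_of_mink_self_pos {n : ℕ} {u : Fin (n + 1) → ℝ} (hu : 0 < mink u u) :
    u 0 ≠ 0 := fun h0 => (mink_self_nonpos_of_apply_zero h0).not_gt hu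

lemma mink_self_smul_sub_smul {n : ℕ} (u v : Fin (n + 1) → ℝ) (a b : ℝ) :
    mink (a • u - b • v) (a • u - b • v)
      = a ^ 2 * mink u u - 2 * a * b * mink u v + b ^ 2 * mink v v := by
  simp only [mink, Pi.sub_apply, Pi.smul_apply, smul_eq_mul, Finset.mul_sum,
    ← Finset.sum_sub_distrib, ← Finset.sum_add_distrib]
  exact Finset.sum_congr rfl fun i _ => by ring

lemma mink_self_nonpos_of_mink_eq_zero {n : ℕ} {u v : Fin (n + 1) → ℝ} (hu : 0 < mink u u)
    (huv : mink u v = 0) : mink v v ≤ 0 := by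
  have hw : mink (v 0 • u - u 0 • v) (v 0 • u - u 0 • v) ≤ 0 :=
    mink_self_nonpos_of_apply_zero (by simp [mul_comm])
  rw [mink_self_smul_sub_smul, huv] at hw
  have hu0 : 0 < u 0 ^ 2 := sq_pos_of_ne_zero (apply_zero_ne_zero_of_mink_self_pos hu)
  nlinarith [mul_nonneg (sq_nonneg (v 0)) hu.le]

lemma mink_row_row_of_sq2_eq_smul_gMat {n : ℕ} {T : Matrix (Fin (n + 1)) (Fin (n + 1)) ℝ} {f : ℝ}
    (h : sq2 T = f • gMat) (a b : Fin (n + 1)) : mink (T a) (T b) = f * gMat a b := by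
  simpa [sq2, mink, Matrix.smul_apply] using congrFun (congrFun h a) b

/-- in dimension ≥ 3, T_{ac}T_b{}^c = f·g_{ab} implies f ≥ 0. -/
theorem stmt12 {n : ℕ} (T : Matrix (Fin (n + 3)) (Fin (n + 3)) ℝ) (f : ℝ)
    (h : sq2 T = f • gMat) : 0 ≤ f := by
  have h1 : (1 : Fin (n + 3)) ≠ 0 := by simp
  have h2 : (2 : Fin (n + 3)) ≠ 0 := by simp [Fin.ext_iff, Nat.mod_eq_of_lt]
  have h12 : (1 : Fin (n + 3)) ≠ 2 := by simp [Fin.ext_iff, Nat.mod_eq_of_lt]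
  have hrow := mink_row_row_of_sq2_eq_smul_gMat h
  have h11 : mink (T 1) (T 1) = -f := by simp [hrow, gMat, eta, h1]
  have h22 : mink (T 2) (T 2) = -f := by simp [hrow, gMat, eta, h2]
  have h_orth : mink (T 1) (T 2) = 0 := by simp [hrow, gMat, h12]
  by_contra! hf
  have h22_nonpos := mink_self_nonpos_of_mink_eq_zero (by linarith) h_orth
  linarith
end
end

section
/- For any covector J on a Lorentzian vector space, the superenergy tensor T{J}_{ab} = J_a J_b - (1/2)(J·J) g_{ab} has the dominant property: T{J}(u,v) ≥ 0 for all future-pointing causal vectors u, v. -/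
noncomputable section

/-- The superenergy tensor of a covector J. -/
def seJ {n : ℕ} (J : Fin (n + 1) → ℝ) : Matrix (Fin (n + 1)) (Fin (n + 1)) ℝ :=
  Matrix.of fun a b => J a * J b - (1 / 2) * mink J J * gMat a b

/-!
Write `u = (a, x)`, `v = (b, y)` and `J = (p, z)` in an orthonormal frame, so that
`|x| ≤ a` and `|y| ≤ b`. Then `2 T{J}(u, v)` is a quadratic polynomial in `p` with leading
coefficient `ab + x·y ≥ 0`. Putting `a² = |x|² + α` and `b² = |y|² + β`, its discriminant is,
up to a factor `-4`, the Gram determinant of `x, y, z` plus `α`, `β` and `αβ` times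
Cauchy–Schwarz defects, hence it is nonpositive. When the leading coefficient vanishes,
`u` and `v` are null with opposite spatial parts, and the linear coefficient vanishes too.
-/

open Matrix

section Gram

variable {ι : Type*} [Fintype ι]

theorem det_gram_nonneg {k : ℕ} (v : Fin k → ι → ℝ) :
    0 ≤ (of fun i j => v i ⬝ᵥ v j).det := by
  have hgram : (of fun i j => v i ⬝ᵥ v j) = of v * (of v)ᴴ := by
    ext i j
    simp [mul_apply, dotProduct]
  rw [hgram]
  exact (posSemidef_self_mul_conjTranspose _).det_nonneg

theorem dotProduct_self_nonneg (x : ι → ℝ) : 0 ≤ x ⬝ᵥ x := by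
  simpa using dotProduct_star_self_nonneg x

theorem dotProduct_mul_self_le (x y : ι → ℝ) :
    (x ⬝ᵥ y) * (x ⬝ᵥ y) ≤ (x ⬝ᵥ x) * (y ⬝ᵥ y) := by
  have h := det_gram_nonneg ![x, y]
  simp [det_fin_two, dotProduct_comm y x] at h
  linarith

theorem det_gram_three_nonneg (x y z : ι → ℝ) :
    0 ≤ (x ⬝ᵥ x) * (y ⬝ᵥ y) * (z ⬝ᵥ z) + 2 * (x ⬝ᵥ y) * (y ⬝ᵥ z) * (x ⬝ᵥ z)
      - (x ⬝ᵥ x) * ((y ⬝ᵥ z) * (y ⬝ᵥ z)) - (y ⬝ᵥ y) * ((x ⬝ᵥ z) * (x ⬝ᵥ z))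
      - (z ⬝ᵥ z) * ((x ⬝ᵥ y) * (x ⬝ᵥ y)) := by
  have h := det_gram_nonneg ![x, y, z]
  simp [det_fin_three, dotProduct_comm y x, dotProduct_comm z x, dotProduct_comm z y] at h
  linarith

theorem superenergy_discrim_nonpos {a b : ℝ} {x y : ι → ℝ} (z : ι → ℝ)
    (hx : x ⬝ᵥ x ≤ a * a) (hy : y ⬝ᵥ y ≤ b * b) :
    discrim (a * b + x ⬝ᵥ y) (2 * (a * (y ⬝ᵥ z) + b * (x ⬝ᵥ z)))
      ((a * b - x ⬝ᵥ y) * (z ⬝ᵥ z) + 2 * (x ⬝ᵥ z) * (y ⬝ᵥ z)) ≤ 0 := by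
  have hα := sub_nonneg.2 hx
  have hβ := sub_nonneg.2 hy
  rw [discrim]
  nlinarith [det_gram_three_nonneg x y z,
    mul_nonneg hα (sub_nonneg.2 (dotProduct_mul_self_le y z)),
    mul_nonneg hβ (sub_nonneg.2 (dotProduct_mul_self_le x z)),
    mul_nonneg (mul_nonneg hα hβ) (dotProduct_self_nonneg z)]

theorem superenergy_form_nonneg {a b : ℝ} (p : ℝ) {x y : ι → ℝ} (z : ι → ℝ)
    (ha : 0 ≤ a) (hb : 0 ≤ b) (hx : x ⬝ᵥ x ≤ a * a) (hy : y ⬝ᵥ y ≤ b * b) :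
    0 ≤ (a * p + x ⬝ᵥ z) * (b * p + y ⬝ᵥ z)
      - 1 / 2 * (p * p - z ⬝ᵥ z) * (a * b - x ⬝ᵥ y) := by
  have hdisc := superenergy_discrim_nonpos z hx hy
  rw [discrim] at hdisc
  have hlead : 0 ≤ a * b + x ⬝ᵥ y := by
    nlinarith [dotProduct_mul_self_le x y, mul_le_mul hx hy (dotProduct_self_nonneg y)
      (mul_self_nonneg a), mul_nonneg ha hb]
  rcases hlead.eq_or_lt with hlead | hlead
  · have hlin : a * (y ⬝ᵥ z) + b * (x ⬝ᵥ z) = 0 := by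
      rw [← hlead] at hdisc
      have hsq : (a * (y ⬝ᵥ z) + b * (x ⬝ᵥ z)) ^ 2 ≤ 0 := by linarith
      exact (pow_eq_zero_iff two_ne_zero).1 (le_antisymm hsq (sq_nonneg _))
    have hxz : (x ⬝ᵥ z) * (x ⬝ᵥ z) ≤ a * a * (z ⬝ᵥ z) :=
      (dotProduct_mul_self_le x z).trans
        (mul_le_mul_of_nonneg_right hx (dotProduct_self_nonneg z))
    have hconst : (a * p + x ⬝ᵥ z) * (b * p + y ⬝ᵥ z)
        - 1 / 2 * (p * p - z ⬝ᵥ z) * (a * b - x ⬝ᵥ y)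
        = (x ⬝ᵥ z) * (y ⬝ᵥ z) + a * b * (z ⬝ᵥ z) := by
      linear_combination p * hlin - 1 / 2 * (p * p - z ⬝ᵥ z) * hlead
    rw [hconst]
    rcases ha.eq_or_lt with rfl | ha
    · have hxz0 : x ⬝ᵥ z = 0 :=
        mul_self_eq_zero.1 (le_antisymm (by simpa using hxz) (mul_self_nonneg _))
      simp [hxz0]
    · refine nonneg_of_mul_nonneg_right ?_ ha
      have hmul : a * ((x ⬝ᵥ z) * (y ⬝ᵥ z) + a * b * (z ⬝ᵥ z))
          = b * (a * a * (z ⬝ᵥ z) - (x ⬝ᵥ z) * (x ⬝ᵥ z)) := by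
        linear_combination (x ⬝ᵥ z) * hlin
      rw [hmul]
      exact mul_nonneg hb (sub_nonneg.2 hxz)
  · refine nonneg_of_mul_nonneg_right ?_ hlead
    nlinarith [mul_self_nonneg ((a * b + x ⬝ᵥ y) * p + (a * (y ⬝ᵥ z) + b * (x ⬝ᵥ z)))]

end Gram

theorem mink_eq_sub_dotProduct_tail {n : ℕ} (u v : Fin (n + 1) → ℝ) :
    mink u v = u 0 * v 0 - Fin.tail u ⬝ᵥ Fin.tail v := by
  simp [mink, eta, Fin.sum_univ_succ, dotProduct, Fin.tail]
  ring

theorem dotProduct_eq_add_dotProduct_tail {n : ℕ} (u v : Fin (n + 1) → ℝ) :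
    u ⬝ᵥ v = u 0 * v 0 + Fin.tail u ⬝ᵥ Fin.tail v :=
  Fin.sum_univ_succ _

theorem CausalFuture.dotProduct_tail_le {n : ℕ} {u : Fin (n + 1) → ℝ} (hu : CausalFuture u) :
    Fin.tail u ⬝ᵥ Fin.tail u ≤ u 0 * u 0 := by
  have h := hu.1
  rw [mink_eq_sub_dotProduct_tail] at h
  linarith

theorem quad_seJ {n : ℕ} (J u v : Fin (n + 1) → ℝ) :
    quad (seJ J) u v = (u ⬝ᵥ J) * (v ⬝ᵥ J) - 1 / 2 * mink J J * mink u v := by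
  simp only [quad, seJ, of_apply]
  generalize mink J J = c
  simp only [mink, gMat, diagonal_apply, mul_ite, mul_zero, mul_sub, sub_mul, ite_mul, zero_mul,
    Finset.sum_sub_distrib, Finset.sum_ite_eq, Finset.mem_univ, if_true, dotProduct,
    Finset.sum_mul_sum]
  congr 1
  · exact Finset.sum_congr rfl fun a _ => Finset.sum_congr rfl fun b _ => by ring
  · rw [Finset.mul_sum]
    exact Finset.sum_congr rfl fun a _ => by ring

/-- the superenergy tensor of any covector has the dominant
property. -/
theorem stmt16 {n : ℕ} (J : Fin (n + 1) → ℝ) : DP2 (seJ J) := by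
  intro u v hu hv
  rw [quad_seJ, mink_eq_sub_dotProduct_tail, mink_eq_sub_dotProduct_tail,
    dotProduct_eq_add_dotProduct_tail u, dotProduct_eq_add_dotProduct_tail v]
  exact superenergy_form_nonneg (J 0) (Fin.tail J) hu.2.2.le hv.2.2.le hu.dotProduct_tail_le
    hv.dotProduct_tail_le
end
end

section
/- In any dimension N, if a symmetric rank-2 tensor T satisfies T_{ac} T_b{}^c = 0, then T = β·k⊗k for some scalar β and null covector k; in particular T or -T has the dominant property. -/
/-!
`T_{ac} T_b{}^c = 0` says that the rows of `T` are mutually orthogonal null vectors. In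
Lorentzian signature two orthogonal null vectors are proportional, so every row is a multiple of
one null `k`, and symmetry of `T` forces `T = β k ⊗ k`. Normalising `k₀ ≥ 0`, Cauchy–Schwarz on
the spatial parts shows `k(u) ≥ 0` for every future causal `u`, so `T(u, v) = β k(u) k(v)` has
the sign of `β`: `T` is dominant if `β ≥ 0` and `-T` if `β ≤ 0`.
-/

noncomputable section

open Finset

lemma mink_eq_sub_sum_succ {n : ℕ} (u v : Fin (n + 1) → ℝ) :
    mink u v = u 0 * v 0 - ∑ i : Fin n, u i.succ * v i.succ := by
  simp [mink, Fin.sum_univ_succ, eta, Fin.succ_ne_zero, sub_eq_add_neg]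

lemma sq2_apply {n : ℕ} (T : Matrix (Fin (n + 1)) (Fin (n + 1)) ℝ) (a b : Fin (n + 1)) :
    sq2 T a b = mink (T a) (T b) :=
  rfl

lemma eq_zero_of_mink_self_eq_zero {n : ℕ} {r : Fin (n + 1) → ℝ} (hr : mink r r = 0)
    (h0 : r 0 = 0) : r = 0 := by
  rw [mink_eq_sub_sum_succ, h0, zero_mul, zero_sub, neg_eq_zero,
    sum_eq_zero_iff_of_nonneg fun i _ => mul_self_nonneg _] at hr
  funext i
  induction i using Fin.cases with
  | zero => exact h0
  | succ j => exact mul_self_eq_zero.1 (hr j (mem_univ j))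

-- `s 0 • r - r 0 • s` is a null vector with vanishing time component.
lemma smul_eq_smul_of_mink_eq_zero {n : ℕ} {r s : Fin (n + 1) → ℝ} (hr : mink r r = 0)
    (hs : mink s s = 0) (hrs : mink r s = 0) : s 0 • r = r 0 • s := by
  set w := s 0 • r - r 0 • s
  have hww : mink w w = s 0 ^ 2 * mink r r - 2 * (r 0 * s 0) * mink r s
      + r 0 ^ 2 * mink s s := by
    simp only [w, mink, mul_sum, ← sum_sub_distrib, ← sum_add_distrib]
    exact sum_congr rfl fun i _ => by simp only [Pi.sub_apply, Pi.smul_apply, smul_eq_mul]; ring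
  have hw0 : w 0 = 0 := by simp only [w, Pi.sub_apply, Pi.smul_apply, smul_eq_mul]; ring
  exact sub_eq_zero.1 (eq_zero_of_mink_self_eq_zero (by rw [hww, hr, hs, hrs]; ring) hw0)

lemma dotProduct_nonneg_of_causal {n : ℕ} {k u : Fin (n + 1) → ℝ} (hk : 0 ≤ mink k k)
    (hk0 : 0 ≤ k 0) (hu : 0 ≤ mink u u) (hu0 : 0 ≤ u 0) : 0 ≤ k ⬝ᵥ u := by
  rw [mink_eq_sub_sum_succ] at hk hu
  set S := ∑ i : Fin n, k i.succ * u i.succ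
  have hS : S ^ 2 ≤ (k 0 * u 0) ^ 2 :=
    calc S ^ 2 ≤ (∑ i : Fin n, k i.succ ^ 2) * ∑ i : Fin n, u i.succ ^ 2 :=
          sum_mul_sq_le_sq_mul_sq _ _ _
      _ ≤ k 0 ^ 2 * u 0 ^ 2 := by
          simp only [sq]
          exact mul_le_mul (by linarith) (by linarith) (sum_nonneg fun i _ => mul_self_nonneg _)
            (mul_self_nonneg _)
      _ = (k 0 * u 0) ^ 2 := by ring
  have : -(k 0 * u 0) ≤ S := (abs_le_of_sq_le_sq' hS (mul_nonneg hk0 hu0)).1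
  rw [dotProduct, Fin.sum_univ_succ]
  linarith

lemma quad_of_eq_mul_mul {n : ℕ} {S : Matrix (Fin (n + 1)) (Fin (n + 1)) ℝ} {γ : ℝ}
    {k : Fin (n + 1) → ℝ} (hS : ∀ a b, S a b = γ * k a * k b) (u v : Fin (n + 1) → ℝ) :
    quad S u v = γ * (k ⬝ᵥ u) * (k ⬝ᵥ v) := by
  rw [quad, dotProduct, dotProduct, mul_sum (s := univ) (a := γ), sum_mul_sum]
  exact sum_congr rfl fun a _ => sum_congr rfl fun b _ => by rw [hS]; ring

lemma dp2_of_eq_mul_mul {n : ℕ} {S : Matrix (Fin (n + 1)) (Fin (n + 1)) ℝ} {γ : ℝ}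
    {k : Fin (n + 1) → ℝ} (hS : ∀ a b, S a b = γ * k a * k b) (hγ : 0 ≤ γ)
    (hk : 0 ≤ mink k k) (hk0 : 0 ≤ k 0) : DP2 S := by
  rintro u v ⟨hu, -, hu0⟩ ⟨hv, -, hv0⟩
  rw [quad_of_eq_mul_mul hS]
  exact mul_nonneg (mul_nonneg hγ (dotProduct_nonneg_of_causal hk hk0 hu hu0.le))
    (dotProduct_nonneg_of_causal hk hk0 hv hv0.le)

lemma exists_eq_mul_mul_of_mink_rows_eq_zero {n : ℕ} {T : Matrix (Fin (n + 1)) (Fin (n + 1)) ℝ}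
    (hsymm : ∀ a b, T a b = T b a) (hrows : ∀ a b, mink (T a) (T b) = 0) :
    ∃ (β : ℝ) (k : Fin (n + 1) → ℝ), mink k k = 0 ∧ 0 ≤ k 0 ∧
      ∀ a b, T a b = β * k a * k b := by
  by_cases hcol : ∀ a, T a 0 = 0
  · refine ⟨0, 0, by simp [mink], le_rfl, fun a b => ?_⟩
    rw [eq_zero_of_mink_self_eq_zero (hrows a a) (hcol a)]
    simp
  push Not at hcol
  obtain ⟨a₀, ha₀⟩ := hcol
  set k := (T a₀ 0)⁻¹ • T a₀
  have hk0 : k 0 = 1 := by simp [k, ha₀]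
  have hk : mink k k = (T a₀ 0)⁻¹ ^ 2 * mink (T a₀) (T a₀) := by
    simp only [k, mink, mul_sum]
    exact sum_congr rfl fun i _ => by simp only [Pi.smul_apply, smul_eq_mul]; ring
  rw [hrows, mul_zero] at hk
  have hrow : ∀ a b, T a b = T a 0 * k b := fun a b => by
    have := congrFun (smul_eq_smul_of_mink_eq_zero (hrows a a) (hrows a₀ a₀) (hrows a a₀)) b
    simp only [k, Pi.smul_apply, smul_eq_mul] at this ⊢
    rw [eq_comm, ← mul_assoc, mul_comm (T a 0), mul_assoc, ← this, inv_mul_cancel_left₀ ha₀]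
  refine ⟨T 0 0, k, hk, by rw [hk0]; exact zero_le_one, fun a b => ?_⟩
  rw [hrow a b, hsymm a 0, hrow 0 a]

/-- a symmetric rank-2 tensor with T_{ac}T_b{}^c = 0 equals β·k⊗k
for a scalar β and a null covector k; in particular T or -T has the dominant
property. -/
theorem stmt19 {n : ℕ} (T : Matrix (Fin (n + 1)) (Fin (n + 1)) ℝ)
    (hsymm : ∀ a b, T a b = T b a) (h : sq2 T = 0) :
    (∃ (β : ℝ) (k : Fin (n + 1) → ℝ), mink k k = 0 ∧
      ∀ a b, T a b = β * k a * k b) ∧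
    (DP2 T ∨ DP2 (-T)) := by
  have hrows : ∀ a b, mink (T a) (T b) = 0 := fun a b => by
    rw [← sq2_apply, h, Matrix.zero_apply]
  obtain ⟨β, k, hk, hk0, hT⟩ := exists_eq_mul_mul_of_mink_rows_eq_zero hsymm hrows
  refine ⟨⟨β, k, hk, hT⟩, ?_⟩
  rcases le_total 0 β with hβ | hβ
  · exact .inl (dp2_of_eq_mul_mul hT hβ hk.ge hk0)
  · refine .inr (dp2_of_eq_mul_mul (γ := -β) (fun a b => ?_) (neg_nonneg.2 hβ) hk.ge hk0)
    rw [Matrix.neg_apply, hT]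
    ring
end
end
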